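/- arXiv:2412.14845 — 5 statements merged into one kernel-verified Lean document; each statement's English description precedes it below -/
import Mathlib

section
/- Let H be a graph with maximum degree at most Δ, let v be a vertex of H, and let s ≥ 1. Then the number of vertex subsets S of H with v ∈ S, |S| = s, and H[S] connected is at most e·(eΔ)^{s-1}. -/
/-!
Number the neighbours of every vertex by ports `j < Δ` and explore a connected set `S ∋ v`
greedily: keeping the list `L` of vertices found so far (starting from `[v]`), take the least
code `i * Δ + j` whose port `j` at `L[i]` leads to a new vertex of `S`, and append that vertex.
The chosen codes increase and the `k`-th one is below `k * Δ`, so `S` is recovered by replaying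
an `(s - 1)`-subset of `range ((s - 1) * Δ)` in increasing order. Hence there are at most
`((s - 1) * Δ).choose (s - 1) ≤ ((s - 1) * Δ) ^ (s - 1) / (s - 1)! ≤ (e * Δ) ^ (s - 1)` such sets.
-/

open Real Nat in
theorem choose_mul_le_exp_mul_pow (n Δ : ℕ) : ((n * Δ).choose n : ℝ) ≤ (exp 1 * Δ) ^ n := by
  have hn : (n : ℝ) ^ n / n ! ≤ exp 1 ^ n := by
    simpa [← exp_nat_mul] using Real.pow_div_factorial_le_exp (n : ℝ) n.cast_nonneg n
  calc ((n * Δ).choose n : ℝ) ≤ ((n * Δ : ℕ) : ℝ) ^ n / n ! := choose_le_pow_div n _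
    _ = (n : ℝ) ^ n / n ! * (Δ : ℝ) ^ n := by push_cast; ring
    _ ≤ exp 1 ^ n * (Δ : ℝ) ^ n := by gcongr
    _ = (exp 1 * Δ) ^ n := (mul_pow _ _ _).symm

namespace SimpleGraph

variable {V : Type*} {H : SimpleGraph V}

theorem exists_adj_of_induce_connected {s t : Set V} (hs : (H.induce s).Connected)
    (hts : t ⊆ s) {a b : V} (ha : a ∈ t) (hb : b ∈ s) (hbt : b ∉ t) :
    ∃ u ∈ t, ∃ w ∈ s, w ∉ t ∧ H.Adj u w := by
  obtain ⟨p⟩ := hs.preconnected ⟨a, hts ha⟩ ⟨b, hb⟩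
  obtain ⟨d, -, hd₁, hd₂⟩ := p.exists_boundary_dart {x | (x : V) ∈ t} ha hbt
  exact ⟨d.fst, hd₁, d.snd, d.snd.2, hd₂, by simpa using d.adj⟩

variable (H) [H.LocallyFinite]

noncomputable def port (u : V) (j : ℕ) : Option V := (H.neighborFinset u).toList[j]?

variable {H}

theorem lt_degree_of_port_eq_some {u w : V} {j : ℕ} (h : H.port u j = some w) :
    j < H.degree u := by
  simpa using (List.getElem?_eq_some_iff.mp h).1

theorem exists_port_eq_some {u w : V} (h : H.Adj u w) : ∃ j, H.port u j = some w :=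
  List.mem_iff_getElem?.mp (by simpa using h)

variable (H) (Δ : ℕ)

/-- The code `x = i * Δ + j` points to the `j`-th neighbour of `L[i]`. -/
noncomputable def codeTarget (L : List V) (x : ℕ) : Option V :=
  L[x / Δ]?.bind (H.port · (x % Δ))

noncomputable def exploreStep (L : List V) (x : ℕ) : List V :=
  match H.codeTarget Δ L x with
  | some w => L ++ [w]
  | none => L

noncomputable def explore (v : V) (P : List ℕ) : List V :=
  P.foldl (H.exploreStep Δ) [v]

def IsFreshCode (S : Finset V) (L : List V) (x : ℕ) : Prop :=
  ∃ w ∈ S, w ∉ L ∧ H.codeTarget Δ L x = some w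

variable {H Δ}

theorem codeTarget_append_of_lt {L M : List V} {x : ℕ} (hx : x / Δ < L.length) :
    H.codeTarget Δ (L ++ M) x = H.codeTarget Δ L x := by
  simp only [codeTarget, List.getElem?_append_left hx]

theorem codeTarget_mul_add {L : List V} {i j : ℕ} (hj : j < Δ) :
    H.codeTarget Δ L (i * Δ + j) = L[i]?.bind (H.port · j) := by
  have hpos : 0 < Δ := by omega
  simp only [codeTarget, Nat.mul_add_mod_self_right, Nat.mod_eq_of_lt hj]
  rw [show (i * Δ + j) / Δ = i by rw [Nat.add_comm, Nat.add_mul_div_right _ _ hpos,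
    Nat.div_eq_of_lt hj, Nat.zero_add]]

theorem lt_length_mul_of_codeTarget_eq_some (hΔ : ∀ u, H.degree u ≤ Δ) {L : List V}
    {x : ℕ} {w : V} (h : H.codeTarget Δ L x = some w) : x < L.length * Δ := by
  obtain ⟨u, hu, hw⟩ := Option.bind_eq_some_iff.mp h
  have hpos : 0 < Δ := (lt_degree_of_port_eq_some hw).trans_le (hΔ u) |>.pos
  exact (Nat.div_lt_iff_lt_mul hpos).mp (List.getElem?_eq_some_iff.mp hu).1

theorem explore_nil (v : V) : H.explore Δ v [] = [v] := rfl

theorem explore_append_singleton (v : V) (P : List ℕ) (x : ℕ) :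
    H.explore Δ v (P ++ [x]) = H.exploreStep Δ (H.explore Δ v P) x := by
  simp [explore, List.foldl_append]

theorem mem_explore_self (v : V) (P : List ℕ) : v ∈ H.explore Δ v P := by
  induction P using List.reverseRecOn with
  | nil => simp [explore_nil]
  | append_singleton P x ih =>
    rw [explore_append_singleton, exploreStep]
    split <;> simp [ih]

theorem exists_isFreshCode (hΔ : ∀ u, H.degree u ≤ Δ) {S : Finset V}
    (hS : (H.induce (S : Set V)).Connected) {L : List V} (hLS : ∀ u ∈ L, u ∈ S) {v b : V}
    (hv : v ∈ L) (hb : b ∈ S) (hbL : b ∉ L) : ∃ x, H.IsFreshCode Δ S L x := by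
  obtain ⟨u, huL, w, hwS, hwL, huw⟩ :=
    exists_adj_of_induce_connected hS (t := {u | u ∈ L}) hLS hv hb hbL
  obtain ⟨i, hi⟩ := List.mem_iff_getElem?.mp huL
  obtain ⟨j, hj⟩ := exists_port_eq_some huw
  refine ⟨i * Δ + j, w, hwS, hwL, ?_⟩
  rw [codeTarget_mul_add ((lt_degree_of_port_eq_some hj).trans_le (hΔ u)), hi]
  exact hj

/-- A code fresh after appending `w` was either fresh before and differs from `x`, or starts at
`w` and so exceeds every code starting in `L`. -/
theorem lt_of_isFreshCode_append (hΔ : ∀ u, H.degree u ≤ Δ) {S : Finset V} {L : List V}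
    {x y : ℕ} {w : V} (hxw : H.codeTarget Δ L x = some w)
    (hmin : ∀ z, H.IsFreshCode Δ S L z → x ≤ z) (hy : H.IsFreshCode Δ S (L ++ [w]) y) :
    x < y := by
  obtain ⟨w', hw'S, hw'L, hyw'⟩ := hy
  have hxL := lt_length_mul_of_codeTarget_eq_some hΔ hxw
  by_cases hyL : y / Δ < L.length
  · rw [codeTarget_append_of_lt hyL] at hyw'
    refine (hmin y ⟨w', hw'S, fun h => hw'L (List.mem_append_left _ h), hyw'⟩).lt_of_ne ?_
    rintro rfl
    cases hxw.symm.trans hyw'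
    exact hw'L (List.mem_append_right _ (List.mem_singleton_self _))
  · have hpos : 0 < Δ := Nat.pos_of_ne_zero (by rintro rfl; simp at hxL)
    exact hxL.trans_le ((Nat.le_div_iff_mul_le hpos).mp (not_lt.mp hyL))

variable (H Δ) in
structure IsGreedyCode (S : Finset V) (v : V) (P : List ℕ) : Prop where
  sorted : P.Pairwise (· < ·)
  lt_length_mul : ∀ x ∈ P, x < P.length * Δ
  length_explore : (H.explore Δ v P).length = P.length + 1
  nodup : (H.explore Δ v P).Nodup
  subset : ∀ u ∈ H.explore Δ v P, u ∈ S
  lt_of_isFreshCode : ∀ x, H.IsFreshCode Δ S (H.explore Δ v P) x → ∀ y ∈ P, y < x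

theorem isGreedyCode_nil {S : Finset V} {v : V} (hv : v ∈ S) : H.IsGreedyCode Δ S v [] where
  sorted := List.Pairwise.nil
  lt_length_mul := by simp
  length_explore := rfl
  nodup := List.nodup_singleton v
  subset := by simpa [explore_nil] using hv
  lt_of_isFreshCode := by simp

open Classical in
theorem IsGreedyCode.append_find (hΔ : ∀ u, H.degree u ≤ Δ) {S : Finset V} {v : V}
    {P : List ℕ} (hP : H.IsGreedyCode Δ S v P)
    (hx : ∃ x, H.IsFreshCode Δ S (H.explore Δ v P) x) :
    H.IsGreedyCode Δ S v (P ++ [Nat.find hx]) := by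
  obtain ⟨w, hwS, hwL, hxw⟩ := Nat.find_spec hx
  have hexplore : H.explore Δ v (P ++ [Nat.find hx]) = H.explore Δ v P ++ [w] := by
    rw [explore_append_singleton, exploreStep, hxw]
  have hxP : ∀ y ∈ P, y < Nat.find hx := hP.lt_of_isFreshCode _ (Nat.find_spec hx)
  have hxlt : Nat.find hx < (P.length + 1) * Δ :=
    hP.length_explore ▸ lt_length_mul_of_codeTarget_eq_some hΔ hxw
  have hnext : ∀ y, H.IsFreshCode Δ S (H.explore Δ v P ++ [w]) y → Nat.find hx < y :=
    fun y => lt_of_isFreshCode_append hΔ hxw (fun z hz => Nat.find_min' hx hz)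
  refine ⟨?_, ?_, ?_, ?_, ?_, ?_⟩
  · exact List.pairwise_append.mpr ⟨hP.sorted, List.pairwise_singleton _ _,
      fun a ha b hb => List.mem_singleton.mp hb ▸ hxP a ha⟩
  · simp only [List.length_append, List.length_singleton, List.mem_append, List.mem_singleton]
    rintro y (hy | rfl)
    · exact (hP.lt_length_mul y hy).trans_le (Nat.mul_le_mul_right _ (Nat.le_succ _))
    · exact hxlt
  · simp [hexplore, hP.length_explore]
  · rw [hexplore]
    exact hP.nodup.append (List.nodup_singleton w) (by simpa using hwL)
  · simp only [hexplore, List.mem_append, List.mem_singleton]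
    rintro u (hu | rfl)
    exacts [hP.subset u hu, hwS]
  · rw [hexplore]
    intro y hy z hz
    rcases List.mem_append.mp hz with hz | hz
    · exact (hxP z hz).trans (hnext y hy)
    · exact List.mem_singleton.mp hz ▸ hnext y hy

theorem exists_isGreedyCode (hΔ : ∀ u, H.degree u ≤ Δ) {S : Finset V}
    (hS : (H.induce (S : Set V)).Connected) {v : V} (hv : v ∈ S) :
    ∀ k < S.card, ∃ P, H.IsGreedyCode Δ S v P ∧ P.length = k := by
  classical
  intro k hk
  induction k with
  | zero => exact ⟨[], isGreedyCode_nil hv, rfl⟩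
  | succ k ih =>
    obtain ⟨P, hP, rfl⟩ := ih (by omega)
    obtain ⟨b, hbS, hbL⟩ : ∃ b ∈ S, b ∉ H.explore Δ v P := by
      by_contra! h
      have := Finset.card_le_card (fun b hb => List.mem_toFinset.mpr (h b hb))
      rw [List.toFinset_card_of_nodup hP.nodup, hP.length_explore] at this
      omega
    have hx := exists_isFreshCode hΔ hS hP.subset (mem_explore_self v P) hbS hbL
    exact ⟨_, hP.append_find hΔ hx, by simp⟩

theorem IsGreedyCode.toFinset_explore_eq [DecidableEq V] {S : Finset V} {v : V}
    {P : List ℕ} (hP : H.IsGreedyCode Δ S v P) (hlen : P.length + 1 = S.card) :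
    (H.explore Δ v P).toFinset = S :=
  Finset.eq_of_subset_of_card_le (fun u hu => hP.subset u (List.mem_toFinset.mp hu)) (by
    rw [List.toFinset_card_of_nodup hP.nodup, hP.length_explore, hlen])

variable (H Δ) in
noncomputable def exploreFinset [DecidableEq V] (v : V) (B : Finset ℕ) : Finset V :=
  (H.explore Δ v (B.sort (· ≤ ·))).toFinset

theorem exists_exploreFinset_eq [DecidableEq V] (hΔ : ∀ u, H.degree u ≤ Δ) {S : Finset V}
    (hS : (H.induce (S : Set V)).Connected) {v : V} (hv : v ∈ S) :
    ∃ B ∈ (Finset.range ((S.card - 1) * Δ)).powersetCard (S.card - 1),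
      H.exploreFinset Δ v B = S := by
  have hcard : 0 < S.card := Finset.card_pos.mpr ⟨v, hv⟩
  obtain ⟨P, hP, hlen⟩ := exists_isGreedyCode hΔ hS hv (S.card - 1) (by omega)
  refine ⟨P.toFinset, Finset.mem_powersetCard.mpr ⟨fun x hx => ?_, ?_⟩, ?_⟩
  · exact Finset.mem_range.mpr (hlen ▸ hP.lt_length_mul x (List.mem_toFinset.mp hx))
  · rw [List.toFinset_card_of_nodup hP.sorted.nodup, hlen]
  · rw [exploreFinset, (List.toFinset_sort _ hP.sorted.nodup).mpr (hP.sorted.imp le_of_lt)]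
    exact hP.toFinset_explore_eq (by omega)

theorem ncard_connected_le_choose (hΔ : ∀ u, H.degree u ≤ Δ) (v : V) (s : ℕ) :
    {S : Finset V | v ∈ S ∧ S.card = s ∧ (H.induce (S : Set V)).Connected}.ncard ≤
      ((s - 1) * Δ).choose (s - 1) := by
  classical
  set codes := (Finset.range ((s - 1) * Δ)).powersetCard (s - 1)
  calc _ ≤ ((codes.image (H.exploreFinset Δ v) : Finset (Finset V)) : Set (Finset V)).ncard := by
        refine Set.ncard_le_ncard ?_ (Finset.finite_toSet _)
        rintro S ⟨hv, rfl, hS⟩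
        exact Finset.mem_image.mpr (exists_exploreFinset_eq hΔ hS hv)
    _ ≤ codes.card := by
        rw [Set.ncard_coe_finset]
        exact Finset.card_image_le
    _ = ((s - 1) * Δ).choose (s - 1) := by simp [codes]

end SimpleGraph

open Classical in
theorem connected_sets_count_le_general
    {V : Type*} [Fintype V] (H : SimpleGraph V) [DecidableRel H.Adj]
    (Δ : ℕ) (hΔ : ∀ v : V, H.degree v ≤ Δ)
    (v : V) (s : ℕ) :
    ({S : Finset V | v ∈ S ∧ S.card = s ∧
        (H.induce (S : Set V)).Connected}.ncard : ℝ)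
      ≤ Real.exp 1 * (Real.exp 1 * Δ) ^ (s - 1) :=
  calc _ ≤ (((s - 1) * Δ).choose (s - 1) : ℝ) := by
        exact_mod_cast H.ncard_connected_le_choose hΔ v s
    _ ≤ (Real.exp 1 * Δ) ^ (s - 1) := choose_mul_le_exp_mul_pow _ _
    _ ≤ Real.exp 1 * (Real.exp 1 * Δ) ^ (s - 1) :=
        le_mul_of_one_le_left (by positivity) (Real.one_le_exp zero_le_one)

open Classical in
/-- The number of vertex subsets `S` containing `v`, of size `s`, inducing a connected
subgraph of a graph `H` of maximum degree at most `Δ`, is at most `e·(eΔ)^(s-1)`. -/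
theorem connected_sets_count_le
    {V : Type*} [Fintype V] (H : SimpleGraph V) [DecidableRel H.Adj]
    (Δ : ℕ) (hΔ : ∀ v : V, H.degree v ≤ Δ)
    (v : V) (s : ℕ) (hs : 1 ≤ s) :
    ({S : Finset V | v ∈ S ∧ S.card = s ∧
        (H.induce (S : Set V)).Connected}.ncard : ℝ)
      ≤ Real.exp 1 * (Real.exp 1 * Δ) ^ (s - 1) :=
  connected_sets_count_le_general H Δ hΔ v s
end

section
/- Let k ≥ 3, 0 < α < 1, and let G be an r-regular k-partite k-uniform hypergraph with each partition class of order n ≥ 3. Suppose that for every partition class Z and every S ⊆ Z with |S| ≤ r one has |N_G(S)| ≥ (k-1-α)·r·|S|. Then r ≤ √(2n). -/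
/-! Take `S` in a class `Z` of size `min(r, n)`. Since every edge meets `Z` only once,
`N(S)` lies outside `Z`, so `(k - 1 - α) r |S| ≤ |N(S)| ≤ (k - 1) n ≤ 2 (k - 1 - α) n`, i.e.
`r |S| ≤ 2n`. For `|S| = r` this is `r² ≤ 2n`; `|S| = n < r` would force `r ≤ 2 < n`. -/

def hyperNbhd {V : Type*} [DecidableEq V] (E : Finset (Finset V)) (S : Finset V) :
    Finset V :=
  ((E.filter fun e => (e ∩ S).Nonempty).biUnion id) \ S

section Partite

variable {V ι : Type*} [DecidableEq V] [Fintype ι] [DecidableEq ι]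
  {E : Finset (Finset V)} {parts : ι → Finset V}

theorem hyperNbhd_subset_biUnion_erase (hcover : ∀ v : V, ∃ i, v ∈ parts i)
    (hedge : ∀ e ∈ E, ∀ i, (e ∩ parts i).card ≤ 1) {i : ι} {S : Finset V}
    (hS : S ⊆ parts i) : hyperNbhd E S ⊆ (Finset.univ.erase i).biUnion parts := by
  intro v hv
  simp only [hyperNbhd, Finset.mem_sdiff, Finset.mem_biUnion, Finset.mem_filter, id] at hv
  obtain ⟨⟨e, ⟨he, w, hw⟩, hve⟩, hvS⟩ := hv
  obtain ⟨j, hj⟩ := hcover v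
  refine Finset.mem_biUnion.mpr ⟨j, Finset.mem_erase.mpr ⟨?_, Finset.mem_univ j⟩, hj⟩
  rintro rfl
  obtain ⟨hwe, hwS⟩ := Finset.mem_inter.mp hw
  have hvw : v = w := Finset.card_le_one.mp (hedge e he j) v (Finset.mem_inter.mpr ⟨hve, hj⟩) w
    (Finset.mem_inter.mpr ⟨hwe, hS hwS⟩)
  exact hvS (hvw ▸ hwS)

theorem card_hyperNbhd_le (hcover : ∀ v : V, ∃ i, v ∈ parts i)
    (hedge : ∀ e ∈ E, ∀ i, (e ∩ parts i).card ≤ 1) {n : ℕ} (hcard : ∀ i, (parts i).card = n)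
    {i : ι} {S : Finset V} (hS : S ⊆ parts i) :
    (hyperNbhd E S).card ≤ (Fintype.card ι - 1) * n :=
  calc (hyperNbhd E S).card
      ≤ ((Finset.univ.erase i).biUnion parts).card :=
        Finset.card_le_card (hyperNbhd_subset_biUnion_erase hcover hedge hS)
    _ ≤ (Finset.univ.erase i).card * n :=
        Finset.card_biUnion_le_card_mul _ _ _ fun j _ => (hcard j).le
    _ = (Fintype.card ι - 1) * n := by
        rw [Finset.card_erase_of_mem (Finset.mem_univ i), Finset.card_univ]

end Partite

theorem mul_card_le_two_mul_of_expansion {V : Type*} [DecidableEq V] {k r n : ℕ} {α : ℝ}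
    (hk : 3 ≤ k) (hα : α < 1) {E : Finset (Finset V)} {parts : Fin k → Finset V}
    (hcover : ∀ v : V, ∃ i, v ∈ parts i) (hcard : ∀ i, (parts i).card = n)
    (hedge : ∀ e ∈ E, ∀ i, (e ∩ parts i).card ≤ 1) {i : Fin k} {S : Finset V}
    (hS : S ⊆ parts i) (hexp : ((k : ℝ) - 1 - α) * r * S.card ≤ ((hyperNbhd E S).card : ℝ)) :
    (r : ℝ) * S.card ≤ 2 * n := by
  have hkR : (3 : ℝ) ≤ k := by exact_mod_cast hk
  have hnbhd : ((hyperNbhd E S).card : ℝ) ≤ ((k : ℝ) - 1) * n := by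
    have := card_hyperNbhd_le hcover hedge hcard hS
    rw [Fintype.card_fin] at this
    calc ((hyperNbhd E S).card : ℝ) ≤ (((k - 1) * n : ℕ) : ℝ) := by exact_mod_cast this
      _ = ((k : ℝ) - 1) * n := by rw [Nat.cast_mul, Nat.cast_sub (by omega), Nat.cast_one]
  have hpos : (0 : ℝ) < (k : ℝ) - 1 - α := by linarith
  have hratio : (k : ℝ) - 1 ≤ 2 * ((k : ℝ) - 1 - α) := by linarith
  refine le_of_mul_le_mul_left ?_ hpos
  calc ((k : ℝ) - 1 - α) * (r * S.card) ≤ ((k : ℝ) - 1) * n := by linarith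
    _ ≤ ((k : ℝ) - 1 - α) * (2 * n) := by nlinarith [(Nat.cast_nonneg n : (0 : ℝ) ≤ n)]

theorem r_le_sqrt_two_n_general
    {V : Type*} [DecidableEq V]
    (k r n : ℕ) (hk : 3 ≤ k) (α : ℝ) (hα1 : α < 1) (hn : 3 ≤ n)
    (E : Finset (Finset V)) (parts : Fin k → Finset V)
    (hcover : ∀ v : V, ∃ i, v ∈ parts i)
    (hcard : ∀ i, (parts i).card = n)
    (hedge : ∀ e ∈ E, ∀ i, (e ∩ parts i).card = 1)
    (hexp : ∀ i : Fin k, ∀ S ⊆ parts i, S.card ≤ r →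
      ((k : ℝ) - 1 - α) * r * S.card ≤ ((hyperNbhd E S).card : ℝ)) :
    (r : ℝ) ≤ Real.sqrt (2 * n) := by
  let i₀ : Fin k := ⟨0, by omega⟩
  have hbound : ∀ S ⊆ parts i₀, S.card ≤ r → (r : ℝ) * S.card ≤ 2 * n := fun S hS hSr =>
    mul_card_le_two_mul_of_expansion hk hα1 hcover hcard
      (fun e he j => (hedge e he j).le) hS (hexp i₀ S hS hSr)
  rw [Real.le_sqrt (Nat.cast_nonneg r) (by positivity)]
  rcases le_or_gt r n with hrn | hnr
  · obtain ⟨S, hS, hScard⟩ := Finset.exists_subset_card_eq (s := parts i₀) (hcard i₀ ▸ hrn)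
    simpa [sq, hScard] using hbound S hS hScard.le
  · have hrZ : (r : ℝ) * n ≤ 2 * n := by
      simpa [hcard i₀] using hbound (parts i₀) subset_rfl (hcard i₀ ▸ hnr.le)
    have hnR : (3 : ℝ) ≤ n := by exact_mod_cast hn
    have hnr' : (n : ℝ) < r := by exact_mod_cast hnr
    nlinarith

/-- If an `r`-regular `k`-partite `k`-uniform hypergraph with classes of order `n ≥ 3`
satisfies the expansion property `Exp₁(α)` (small sets expand by `(k-1-α)r`), then
`r ≤ √(2n)`. -/
theorem r_le_sqrt_two_n
    {V : Type*} [Fintype V] [DecidableEq V]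
    (k r n : ℕ) (hk : 3 ≤ k) (α : ℝ) (hα0 : 0 < α) (hα1 : α < 1) (hn : 3 ≤ n)
    (E : Finset (Finset V)) (parts : Fin k → Finset V)
    (hdisj : ∀ i j : Fin k, i ≠ j → Disjoint (parts i) (parts j))
    (hcover : ∀ v : V, ∃ i, v ∈ parts i)
    (hcard : ∀ i, (parts i).card = n)
    (hedge : ∀ e ∈ E, ∀ i, (e ∩ parts i).card = 1)
    (hreg : ∀ v : V, (E.filter fun e => v ∈ e).card = r)
    (hexp : ∀ i : Fin k, ∀ S ⊆ parts i, S.card ≤ r →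
      ((k : ℝ) - 1 - α) * r * S.card ≤ ((hyperNbhd E S).card : ℝ)) :
    (r : ℝ) ≤ Real.sqrt (2 * n) :=
  r_le_sqrt_two_n_general k r n hk α hα1 hn E parts hcover hcard hedge hexp
end

section
/- Let k ≥ 3, β > 0, and let G be an r-regular k-partite k-uniform hypergraph. Then for every partition class Z and every S ⊆ Z with |N_G(S)| ≥ (k-2+β)·r·|S|, the link graph L_G(S) contains a matching of size at least (β/(k-1))·r·|S|. -/
/-- Edge set of the link graph `L_G(S)` of a subset `S` of a partition class: all sets
`e \ S` for edges `e` of `G` intersecting `S`. -/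
def linkEdges {V : Type*} [DecidableEq V] (E : Finset (Finset V)) (S : Finset V) :
    Finset (Finset V) :=
  (E.filter fun e => (e ∩ S).Nonempty).image (fun e => e \ S)

/-- If a subset `S` of a partition class of an `r`-regular `k`-partite `k`-uniform
hypergraph satisfies `|N(S)| ≥ (k-2+β)·r·|S|`, then its link graph contains a matching
of size at least `(β/(k-1))·r·|S|`. -/
theorem expansion_guarantees_linear_matching
    {V : Type*} [Fintype V] [DecidableEq V]
    (k r n : ℕ) (hk : 3 ≤ k) (β : ℝ) (hβ : 0 < β)
    (E : Finset (Finset V)) (parts : Fin k → Finset V)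
    (hdisj : ∀ i j : Fin k, i ≠ j → Disjoint (parts i) (parts j))
    (hcover : ∀ v : V, ∃ i, v ∈ parts i)
    (hcard : ∀ i, (parts i).card = n)
    (hedge : ∀ e ∈ E, ∀ i, (e ∩ parts i).card = 1)
    (hreg : ∀ v : V, (E.filter fun e => v ∈ e).card = r) :
    ∀ i : Fin k, ∀ S ⊆ parts i,
      ((k : ℝ) - 2 + β) * r * S.card ≤ ((hyperNbhd E S).card : ℝ) →
      ∃ M ⊆ linkEdges E S,
        (M : Set (Finset V)).Pairwise (fun a b => Disjoint a b) ∧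
        β / ((k : ℝ) - 1) * r * S.card ≤ (M.card : ℝ) := by
  intro i S hS hN
  -- every edge of the hypergraph has exactly k vertices
  have hecard : ∀ e ∈ E, e.card = k := by
    intro e he
    have hsub : e ⊆ Finset.univ.biUnion (fun j => e ∩ parts j) := by
      intro v hv
      obtain ⟨j, hj⟩ := hcover v
      exact Finset.mem_biUnion.mpr ⟨j, Finset.mem_univ _, Finset.mem_inter.mpr ⟨hv, hj⟩⟩
    have hsub2 : Finset.univ.biUnion (fun j => e ∩ parts j) ⊆ e := by
      intro v hv
      obtain ⟨j, _, hj⟩ := Finset.mem_biUnion.mp hv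
      exact (Finset.mem_inter.mp hj).1
    have heq : e = Finset.univ.biUnion (fun j => e ∩ parts j) :=
      Finset.Subset.antisymm hsub hsub2
    have hdisj' : ∀ a ∈ (Finset.univ : Finset (Fin k)), ∀ b ∈ Finset.univ, a ≠ b →
        Disjoint (e ∩ parts a) (e ∩ parts b) := by
      intro a _ b _ hab
      exact Finset.disjoint_of_subset_left Finset.inter_subset_right
        (Finset.disjoint_of_subset_right Finset.inter_subset_right (hdisj a b hab))
    calc e.card = (Finset.univ.biUnion (fun j => e ∩ parts j)).card := by rw [← heq]
      _ = ∑ j : Fin k, (e ∩ parts j).card := Finset.card_biUnion hdisj'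
      _ = ∑ _j : Fin k, 1 := by
          exact Finset.sum_congr rfl fun j _ => hedge e he j
      _ = k := by simp
  -- edges meeting S meet it in exactly one vertex
  have hinter : ∀ e ∈ E, (e ∩ S).Nonempty → (e ∩ S).card = 1 := by
    intro e he hne
    have h1 : e ∩ S ⊆ e ∩ parts i :=
      Finset.inter_subset_inter (le_refl _) hS
    have := Finset.card_le_card h1
    rw [hedge e he i] at this
    have h2 : 1 ≤ (e ∩ S).card := Finset.card_pos.mpr hne
    omega
  -- every link edge has k-1 vertices
  have hlink : ∀ f ∈ linkEdges E S, f.card = k - 1 := by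
    intro f hf
    obtain ⟨e, he, rfl⟩ := Finset.mem_image.mp hf
    rw [Finset.mem_filter] at he
    have h1 : (e ∩ S).card + (e \ S).card = e.card := Finset.card_inter_add_card_sdiff e S
    rw [hecard e he.1, hinter e he.1 he.2] at h1
    omega
  -- the family of candidate matchings
  set P : Finset (Finset (Finset V)) :=
    (linkEdges E S).powerset.filter
      (fun M => ∀ a ∈ M, ∀ b ∈ M, a ≠ b → Disjoint a b) with hP
  have hPne : P.Nonempty := ⟨∅, by simp [hP]⟩
  obtain ⟨M, hMP, hMmax⟩ := P.exists_max_image (fun M => M.card) hPne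
  rw [hP, Finset.mem_filter, Finset.mem_powerset] at hMP
  obtain ⟨hM_sub, hM_pd⟩ := hMP
  refine ⟨M, hM_sub, ?_, ?_⟩
  · intro a ha b hb hab
    exact hM_pd a ha b hb hab
  -- maximality: every link edge meets the vertex set of M
  set T : Finset V := M.biUnion id with hT
  have hmeet : ∀ f ∈ linkEdges E S, (f ∩ T).Nonempty := by
    intro f hf
    by_cases hfM : f ∈ M
    · have hfsub : f ⊆ T := fun v hv => Finset.mem_biUnion.mpr ⟨f, hfM, hv⟩
      have hfne : f.Nonempty := by
        rw [← Finset.card_pos, hlink f hf]; omega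
      obtain ⟨v, hv⟩ := hfne
      exact ⟨v, Finset.mem_inter.mpr ⟨hv, hfsub hv⟩⟩
    · by_contra hcon
      -- f is disjoint from every member of M, so insert f M is a bigger matching
      have hfd : ∀ g ∈ M, Disjoint f g := by
        intro g hg
        rw [Finset.disjoint_left]
        intro v hvf hvg
        exact hcon ⟨v, Finset.mem_inter.mpr ⟨hvf, Finset.mem_biUnion.mpr ⟨g, hg, hvg⟩⟩⟩
      have hins : insert f M ∈ P := by
        rw [hP, Finset.mem_filter, Finset.mem_powerset]
        constructor
        · exact Finset.insert_subset hf hM_sub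
        · intro a ha b hb hab
          rcases Finset.mem_insert.mp ha with rfl | ha'
          · rcases Finset.mem_insert.mp hb with rfl | hb'
            · exact absurd rfl hab
            · exact hfd b hb'
          · rcases Finset.mem_insert.mp hb with rfl | hb'
            · exact (hfd a ha').symm
            · exact hM_pd a ha' b hb' hab
      have := hMmax _ hins
      rw [Finset.card_insert_of_notMem hfM] at this
      omega
  -- counting bounds
  have hTcard : T.card ≤ M.card * (k - 1) := by
    calc T.card ≤ ∑ f ∈ M, (id f).card := Finset.card_biUnion_le
      _ = ∑ f ∈ M, (k - 1) := Finset.sum_congr rfl fun f hf => hlink f (hM_sub hf)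
      _ = M.card * (k - 1) := by rw [Finset.sum_const, smul_eq_mul]
  have hEcard : (E.filter fun e => (e ∩ S).Nonempty).card ≤ r * S.card := by
    have hsub : (E.filter fun e => (e ∩ S).Nonempty) ⊆
        S.biUnion (fun v => E.filter fun e => v ∈ e) := by
      intro e he
      rw [Finset.mem_filter] at he
      obtain ⟨v, hv⟩ := he.2
      rw [Finset.mem_inter] at hv
      exact Finset.mem_biUnion.mpr ⟨v, hv.2, Finset.mem_filter.mpr ⟨he.1, hv.1⟩⟩
    calc (E.filter fun e => (e ∩ S).Nonempty).card
        ≤ (S.biUnion (fun v => E.filter fun e => v ∈ e)).card := Finset.card_le_card hsub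
      _ ≤ ∑ v ∈ S, (E.filter fun e => v ∈ e).card := Finset.card_biUnion_le
      _ = ∑ v ∈ S, r := Finset.sum_congr rfl fun v _ => hreg v
      _ = r * S.card := by rw [Finset.sum_const, smul_eq_mul, mul_comm]
  have hLcard : (linkEdges E S).card ≤ r * S.card :=
    le_trans (Finset.card_image_le) hEcard
  -- |N(S)| ≤ |T| + Σ_f |f \ T|
  have hNsub : hyperNbhd E S ⊆ T ∪ (linkEdges E S).biUnion (fun f => f \ T) := by
    intro v hv
    rw [hyperNbhd, Finset.mem_sdiff, Finset.mem_biUnion] at hv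
    obtain ⟨⟨e, he, hve⟩, hvS⟩ := hv
    have hfl : e \ S ∈ linkEdges E S := Finset.mem_image_of_mem _ he
    have hvf : v ∈ e \ S := Finset.mem_sdiff.mpr ⟨hve, hvS⟩
    by_cases hvT : v ∈ T
    · exact Finset.mem_union_left _ hvT
    · exact Finset.mem_union_right _
        (Finset.mem_biUnion.mpr ⟨e \ S, hfl, Finset.mem_sdiff.mpr ⟨hvf, hvT⟩⟩)
  have hfT : ∀ f ∈ linkEdges E S, (f \ T).card ≤ k - 2 := by
    intro f hf
    have h1 : (f ∩ T).card + (f \ T).card = f.card := Finset.card_inter_add_card_sdiff f T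
    have h2 : 1 ≤ (f ∩ T).card := Finset.card_pos.mpr (hmeet f hf)
    rw [hlink f hf] at h1
    omega
  have hNbound : (hyperNbhd E S).card ≤ M.card * (k - 1) + (k - 2) * (r * S.card) := by
    calc (hyperNbhd E S).card
        ≤ (T ∪ (linkEdges E S).biUnion (fun f => f \ T)).card := Finset.card_le_card hNsub
      _ ≤ T.card + ((linkEdges E S).biUnion (fun f => f \ T)).card := Finset.card_union_le _ _
      _ ≤ T.card + ∑ f ∈ linkEdges E S, (f \ T).card :=
          Nat.add_le_add_left Finset.card_biUnion_le _
      _ ≤ M.card * (k - 1) + ∑ f ∈ linkEdges E S, (k - 2) := by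
          exact Nat.add_le_add hTcard (Finset.sum_le_sum hfT)
      _ = M.card * (k - 1) + (linkEdges E S).card * (k - 2) := by
          rw [Finset.sum_const, smul_eq_mul]
      _ ≤ M.card * (k - 1) + (r * S.card) * (k - 2) := by
          exact Nat.add_le_add_left (Nat.mul_le_mul_right _ hLcard) _
      _ = M.card * (k - 1) + (k - 2) * (r * S.card) := by ring
  -- pass to the reals
  have hk1 : (1 : ℕ) ≤ k := by omega
  have hk2 : (2 : ℕ) ≤ k := by omega
  have hNR : ((hyperNbhd E S).card : ℝ) ≤
      (M.card : ℝ) * ((k : ℝ) - 1) + ((k : ℝ) - 2) * (r * S.card) := by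
    have := (Nat.cast_le (α := ℝ)).mpr hNbound
    push_cast [Nat.cast_sub hk1, Nat.cast_sub hk2] at this
    linarith
  have hkpos : (0 : ℝ) < (k : ℝ) - 1 := by
    have : (3 : ℝ) ≤ (k : ℝ) := by exact_mod_cast hk
    linarith
  rw [div_mul_eq_mul_div, div_mul_eq_mul_div, div_le_iff₀ hkpos]
  nlinarith [hN, hNR]
end

section
/- Let G be an r-regular k-partite k-uniform hypergraph with partition classes of order n, let Z be a partition class, and let T ⊆ Z. Then the number of independent sets I of G with I ∩ Z = T and I ⊆ T ∪ (V(G)\Z) equals |𝕀(L_G(T))| · 2^{(k-1)n − |N_G(T)|}. -/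
/-!
Every independent set `I` in question has the form `T ∪ S` with `S` a subset of the other
classes. Since every edge meets `Z` in exactly one vertex, an edge inside `T ∪ S` must meet `T`,
so `T ∪ S` is independent exactly when `S ∩ N_G(T)` contains no edge of the link `L_G(T)`;
the part of `S` outside `N_G(T)` is unconstrained and contributes the factor
`2^((k-1)n - |N_G(T)|)`.
-/

open Finset

section

variable {V : Type*} [DecidableEq V]

theorem sdiff_subset_hyperNbhd {E : Finset (Finset V)} {T e : Finset V} (he : e ∈ E)
    (heT : (e ∩ T).Nonempty) : e \ T ⊆ hyperNbhd E T := by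
  intro v hv
  rw [mem_sdiff] at hv
  exact mem_sdiff.mpr ⟨mem_biUnion.mpr ⟨e, mem_filter.mpr ⟨he, heT⟩, hv.1⟩, hv.2⟩

theorem disjoint_hyperNbhd {E : Finset (Finset V)} {T Z : Finset V}
    (hZ : ∀ e ∈ E, #(e ∩ Z) ≤ 1) (hT : T ⊆ Z) : Disjoint (hyperNbhd E T) Z := by
  refine disjoint_left.mpr fun v hv hvZ => ?_
  obtain ⟨hv, hvT⟩ := mem_sdiff.mp hv
  obtain ⟨e, he, hve⟩ := mem_biUnion.mp hv
  obtain ⟨he, u, hu⟩ := mem_filter.mp he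
  have huZ : u ∈ e ∩ Z := mem_inter.mpr ⟨(mem_inter.mp hu).1, hT (mem_inter.mp hu).2⟩
  have : v = u := card_le_one.mp (hZ e he) v (mem_inter.mpr ⟨hve, hvZ⟩) u huZ
  exact hvT (this ▸ (mem_inter.mp hu).2)

theorem not_subset_union_iff_link {E : Finset (Finset V)} {T S Z : Finset V}
    (hZ : ∀ e ∈ E, (e ∩ Z).Nonempty) (hS : Disjoint S Z) :
    (∀ e ∈ E, ¬ e ⊆ T ∪ S) ↔ ∀ f ∈ linkEdges E T, ¬ f ⊆ S ∩ hyperNbhd E T := by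
  constructor
  · intro hind f hf hfS
    obtain ⟨e, he, rfl⟩ := mem_image.mp hf
    refine hind e (mem_filter.mp he).1 fun v hve => ?_
    by_cases hvT : v ∈ T
    · exact mem_union_left _ hvT
    · exact mem_union_right _ (mem_inter.mp (hfS (mem_sdiff.mpr ⟨hve, hvT⟩))).1
  · intro hlink e he heTS
    -- the vertex of `e` in `Z` cannot lie in `S`, so `e` meets `T`
    obtain ⟨a, ha⟩ := hZ e he
    obtain ⟨hae, haZ⟩ := mem_inter.mp ha
    have haT : a ∈ T :=
      (mem_union.mp (heTS hae)).resolve_right fun haS => disjoint_left.mp hS haS haZ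
    have heT : (e ∩ T).Nonempty := ⟨a, mem_inter.mpr ⟨hae, haT⟩⟩
    refine hlink (e \ T) (mem_image.mpr ⟨e, mem_filter.mpr ⟨he, heT⟩, rfl⟩) fun v hv => ?_
    obtain ⟨hve, hvT⟩ := mem_sdiff.mp hv
    exact mem_inter.mpr ⟨(mem_union.mp (heTS hve)).resolve_left hvT,
      sdiff_subset_hyperNbhd he heT hv⟩

theorem card_powerset_filter_inter {N W : Finset V} (hNW : N ⊆ W)
    (P : Finset V → Prop) [DecidablePred P] :
    #{S ∈ W.powerset | P (S ∩ N)} = #{A ∈ N.powerset | P A} * 2 ^ #(W \ N) := by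
  rw [← card_powerset (W \ N), ← card_product]
  refine card_nbij' (fun S => (S ∩ N, S \ N)) (fun p => p.1 ∪ p.2) ?_ ?_ ?_ ?_
  · intro S hS
    simp only [coe_filter, coe_product, Set.mem_prod, mem_coe, mem_powerset,
      Set.mem_ofPred_eq] at hS ⊢
    exact ⟨⟨inter_subset_right, hS.2⟩, sdiff_subset_sdiff hS.1 subset_rfl⟩
  · rintro ⟨A, B⟩ hp
    simp only [coe_filter, coe_product, Set.mem_prod, mem_coe, mem_powerset,
      Set.mem_ofPred_eq] at hp ⊢
    obtain ⟨⟨hA, hPA⟩, hB⟩ := hp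
    have : (A ∪ B) ∩ N = A := by grind
    exact ⟨union_subset (hA.trans hNW) (hB.trans sdiff_subset), by rwa [this]⟩
  · intro S _
    exact sup_inf_sdiff S N
  · rintro ⟨A, B⟩ hp
    simp only [coe_filter, coe_product, Set.mem_prod, mem_coe, mem_powerset,
      Set.mem_ofPred_eq] at hp
    obtain ⟨⟨hA, -⟩, hB⟩ := hp
    simp only [Prod.mk.injEq]
    grind

variable [Fintype V]

theorem card_filter_inter_eq_and_subset (Z T : Finset V) (hT : T ⊆ Z)
    (P : Finset V → Prop) [DecidablePred P] :
    #{I | P I ∧ I ∩ Z = T ∧ I ⊆ T ∪ Zᶜ} = #{S ∈ Zᶜ.powerset | P (T ∪ S)} := by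
  have hTI {I : Finset V} (hI : I ∩ Z = T) : T ⊆ I := hI ▸ inter_subset_left
  refine card_nbij' (· \ T) (T ∪ ·) ?_ ?_ ?_ ?_
  · intro I hI
    simp only [coe_filter, mem_univ, true_and, Set.mem_ofPred_eq, mem_powerset] at hI ⊢
    obtain ⟨hP, hIZ, hIsub⟩ := hI
    exact ⟨sdiff_le_iff.mpr hIsub, by rwa [union_sdiff_of_subset (hTI hIZ)]⟩
  · intro S hS
    simp only [coe_filter, mem_univ, true_and, Set.mem_ofPred_eq, mem_powerset] at hS ⊢
    refine ⟨hS.2, ?_, union_subset_union_right hS.1⟩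
    rw [union_inter_distrib_right, inter_eq_left.mpr hT,
      disjoint_iff_inter_eq_empty.mp (subset_compl_iff_disjoint_right.mp hS.1), union_empty]
  · intro I hI
    simp only [coe_filter, mem_univ, true_and, Set.mem_ofPred_eq] at hI
    exact union_sdiff_of_subset (hTI hI.2.1)
  · intro S hS
    simp only [coe_filter, mem_powerset, Set.mem_ofPred_eq] at hS
    exact union_sdiff_cancel_left ((subset_compl_iff_disjoint_right.mp hS.1).symm.mono_left hT)

theorem card_univ_eq_mul_of_partition {k n : ℕ} (parts : Fin k → Finset V)
    (hdisj : ∀ i j : Fin k, i ≠ j → Disjoint (parts i) (parts j))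
    (hcover : ∀ v : V, ∃ i, v ∈ parts i) (hcard : ∀ i, #(parts i) = n) :
    Fintype.card V = k * n := by
  have : (univ : Finset V) = univ.biUnion parts := by
    ext v; simpa using hcover v
  rw [← card_univ, this, card_biUnion fun a _ b _ hab => hdisj a b hab]
  simp [hcard]

end

theorem indep_count_with_defect_set_general
    {V : Type*} [Fintype V] [DecidableEq V]
    (k n : ℕ)
    (E : Finset (Finset V)) (parts : Fin k → Finset V)
    (hdisj : ∀ i j : Fin k, i ≠ j → Disjoint (parts i) (parts j))
    (hcover : ∀ v : V, ∃ i, v ∈ parts i)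
    (hcard : ∀ i, (parts i).card = n)
    (hedge : ∀ e ∈ E, ∀ i, (e ∩ parts i).card = 1)
    (i : Fin k) (T : Finset V) (hT : T ⊆ parts i) :
    (Finset.univ.filter fun I : Finset V =>
        (∀ e ∈ E, ¬ e ⊆ I) ∧ I ∩ parts i = T ∧
          I ⊆ T ∪ (Finset.univ \ parts i)).card
      = ((hyperNbhd E T).powerset.filter fun A : Finset V =>
          ∀ f ∈ linkEdges E T, ¬ f ⊆ A).card
        * 2 ^ ((k - 1) * n - (hyperNbhd E T).card) := by
  have hN : hyperNbhd E T ⊆ (parts i)ᶜ :=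
    subset_compl_iff_disjoint_right.mpr (disjoint_hyperNbhd (fun e he => (hedge e he i).le) hT)
  have hcompl : #(parts i)ᶜ = (k - 1) * n := by
    rw [card_compl, card_univ_eq_mul_of_partition parts hdisj hcover hcard, hcard, Nat.sub_one_mul]
  rw [← compl_eq_univ_sdiff, card_filter_inter_eq_and_subset _ _ hT]
  rw [filter_congr fun S hS => not_subset_union_iff_link (T := T)
    (fun e he => card_pos.mp (hedge e he i ▸ one_pos))
    (disjoint_right.mpr fun v hv hvS => mem_compl.mp (mem_powerset.mp hS hvS) hv)]
  rw [card_powerset_filter_inter hN fun A => ∀ f ∈ linkEdges E T, ¬ f ⊆ A,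
    card_sdiff_of_subset hN, hcompl]

/-- In an `r`-regular `k`-partite `k`-uniform hypergraph `G` with classes of order `n`,
for a partition class `Z` and `T ⊆ Z`, the number of independent sets `I` of `G`
with `I ∩ Z = T` equals `|𝕀(L_G(T))| · 2^((k-1)n - |N_G(T)|)`. -/
theorem indep_count_with_defect_set
    {V : Type*} [Fintype V] [DecidableEq V]
    (k r n : ℕ) (hk : 2 ≤ k)
    (E : Finset (Finset V)) (parts : Fin k → Finset V)
    (hdisj : ∀ i j : Fin k, i ≠ j → Disjoint (parts i) (parts j))
    (hcover : ∀ v : V, ∃ i, v ∈ parts i)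
    (hcard : ∀ i, (parts i).card = n)
    (hedge : ∀ e ∈ E, ∀ i, (e ∩ parts i).card = 1)
    (hreg : ∀ v : V, (E.filter fun e => v ∈ e).card = r)
    (i : Fin k) (T : Finset V) (hT : T ⊆ parts i) :
    (Finset.univ.filter fun I : Finset V =>
        (∀ e ∈ E, ¬ e ⊆ I) ∧ I ∩ parts i = T ∧
          I ⊆ T ∪ (Finset.univ \ parts i)).card
      = ((hyperNbhd E T).powerset.filter fun A : Finset V =>
          ∀ f ∈ linkEdges E T, ¬ f ⊆ A).card
        * 2 ^ ((k - 1) * n - (hyperNbhd E T).card) :=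
  indep_count_with_defect_set_general k n E parts hdisj hcover hcard hedge i T hT
end

section
/- Let k, m ≥ 3 and let G be a linear k-partite k-uniform hypergraph. Suppose v₁, …, v_{(k-1)m} is a sequence of vertices of G (not necessarily distinct) such that the sets e_i := {v_{(k-1)(i-1)+1}, …, v_{(k-1)i+1}} for i = 1, …, m (indices modulo (k-1)m) are m pairwise distinct edges of G. Then G contains a loose cycle of length at most m. -/
/-!
Strong induction on `m`. If the vertices of the closed walk are pairwise distinct, they form a
loose `m`-cycle. Otherwise rotate the walk so that one occurrence of a repeated vertex lies in
block `0` at a position `j < k - 1`, and write the other as position `j' ∈ [1, k - 1]` of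
block `d`. For `d = 0` uniformity makes the two occurrences coincide; for `d = 1` and `d = m - 1`
the two blocks involved share the repeated vertex and a junction vertex, contradicting
linearity. Hence `2 ≤ d ≤ m - 2`, and blocks `0, …, d`, reordered inside the first and the last
block so that the walk starts and ends at the repeated vertex, form a closed walk through `d + 1`
distinct edges.
-/

/-- A `k`-uniform hypergraph with edge set `E` contains a loose `ℓ`-cycle: a sequence of
`(k-1)ℓ` distinct vertices, indexed cyclically, such that each of the `ℓ` blocks of `k`
consecutive vertices (consecutive blocks overlapping in one vertex) forms an edge. -/
def HasLooseCycle {V : Type*} [DecidableEq V] (k : ℕ) (E : Finset (Finset V))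
    (ℓ : ℕ) : Prop :=
  ∃ w : ZMod ((k - 1) * ℓ) → V, Function.Injective w ∧
    ∀ i : Fin ℓ,
      (Finset.univ.image fun j : Fin k =>
        w ((((k - 1) * (i : ℕ) + (j : ℕ) : ℕ)) : ZMod ((k - 1) * ℓ))) ∈ E

open Finset Function

theorem Finset.image_swap_eq_self {α : Type*} [DecidableEq α] {s : Finset α} {a b : α}
    (h : a ∈ s ↔ b ∈ s) : s.image (Equiv.swap a b) = s := by
  ext x
  simp only [mem_image]
  constructor
  · rintro ⟨y, hy, rfl⟩
    rw [Equiv.swap_apply_def]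
    split_ifs <;> simp_all
  · intro hx
    refine ⟨Equiv.swap a b x, ?_, Equiv.swap_apply_self _ _ _⟩
    rw [Equiv.swap_apply_def]
    split_ifs <;> simp_all

theorem Finset.card_eq_of_card_inter_eq_one {V ι : Type*} [DecidableEq V] [Fintype ι]
    {e : Finset V} {parts : ι → Finset V} (hdisj : Pairwise (Disjoint on parts))
    (hcover : ∀ x ∈ e, ∃ i, x ∈ parts i) (he : ∀ i, (e ∩ parts i).card = 1) :
    e.card = Fintype.card ι := by
  have hcup : e = univ.biUnion fun i => e ∩ parts i := by
    ext x
    simp only [mem_biUnion, mem_univ, true_and, mem_inter]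
    exact ⟨fun hx => (hcover x hx).imp fun _ hi => ⟨hx, hi⟩, fun ⟨_, hx, _⟩ => hx⟩
  rw [hcup, card_biUnion fun i _ j _ hij => (hdisj hij).mono inter_subset_right inter_subset_right]
  simp [he]

namespace Hypergraph

variable {V : Type*} {k m : ℕ}

theorem exists_eq_natCast_mul_add (hk : 2 ≤ k) (hm : 0 < m) (r : ZMod ((k - 1) * m)) :
    ∃ d < m, ∃ j, 1 ≤ j ∧ j ≤ k - 1 ∧ r = (((k - 1) * d + j : ℕ) : ZMod ((k - 1) * m)) := by
  have : NeZero ((k - 1) * m) := ⟨Nat.mul_ne_zero (by omega) (by omega)⟩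
  have hr : r.val < (k - 1) * m := r.val_lt
  rcases Nat.eq_zero_or_pos r.val with h0 | hpos
  · refine ⟨m - 1, by omega, k - 1, by omega, le_rfl, ?_⟩
    rw [(ZMod.val_eq_zero r).mp h0, ← Nat.mul_add_one, Nat.sub_add_cancel hm, ZMod.natCast_self]
  · have hdiv : (r.val - 1) / (k - 1) < m :=
      (Nat.div_lt_iff_lt_mul (by omega)).mpr (by have := Nat.mul_comm m (k - 1); omega)
    refine ⟨(r.val - 1) / (k - 1), hdiv, (r.val - 1) % (k - 1) + 1, by omega,
      Nat.mod_lt _ (by omega), ?_⟩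
    rw [← add_assoc, Nat.div_add_mod, Nat.sub_add_cancel hpos, ZMod.natCast_zmod_val]

/-- Moves position `j` to the front of block `0` and position `(k - 1) * d + j'` to the end of
block `d`; if `v j = v ((k - 1) * d + j')`, blocks `0, …, d` of `v` read in this order form a
closed walk. -/
def shortcutPerm (k j d j' : ℕ) : Equiv.Perm ℕ :=
  Equiv.swap 0 j * Equiv.swap ((k - 1) * d + j') ((k - 1) * (d + 1))

def shortcut (v : ZMod ((k - 1) * m) → V) (j d j' : ℕ) : ZMod ((k - 1) * (d + 1)) → V :=
  fun r => v (shortcutPerm k j d j' r.val : ℕ)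

section shortcut

variable {j d j' : ℕ}

theorem shortcutPerm_zero (hj : j < k - 1) (hd : 1 ≤ d) : shortcutPerm k j d j' 0 = j := by
  have : (k - 1) * 1 ≤ (k - 1) * d := Nat.mul_le_mul_left _ hd
  have := Nat.mul_add_one (k - 1) d
  rw [shortcutPerm, Equiv.Perm.mul_apply,
    Equiv.swap_apply_of_ne_of_ne (a := (k - 1) * d + j') (by omega) (by omega),
    Equiv.swap_apply_left]

theorem shortcutPerm_end (hj : j < k - 1) (hd : 1 ≤ d) :
    shortcutPerm k j d j' ((k - 1) * (d + 1)) = (k - 1) * d + j' := by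
  have : (k - 1) * 1 ≤ (k - 1) * d := Nat.mul_le_mul_left _ hd
  rw [shortcutPerm, Equiv.Perm.mul_apply, Equiv.swap_apply_right,
    Equiv.swap_apply_of_ne_of_ne (by omega) (by omega)]

theorem image_shortcutPerm_Ico (hj : j < k - 1) (hj' : 1 ≤ j') (hj'k : j' ≤ k - 1) {t : ℕ}
    (ht : t ≤ d) :
    (Ico ((k - 1) * t) ((k - 1) * t + k)).image (shortcutPerm k j d j') =
      Ico ((k - 1) * t) ((k - 1) * t + k) := by
  have hfront : (Ico ((k - 1) * t) ((k - 1) * t + k)).image (Equiv.swap 0 j) =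
      Ico ((k - 1) * t) ((k - 1) * t + k) := by
    refine image_swap_eq_self ?_
    simp only [mem_Ico]
    rcases Nat.eq_zero_or_pos t with rfl | ht0
    · omega
    · have : (k - 1) * 1 ≤ (k - 1) * t := Nat.mul_le_mul_left _ ht0
      omega
  have hback : (Ico ((k - 1) * t) ((k - 1) * t + k)).image
      (Equiv.swap ((k - 1) * d + j') ((k - 1) * (d + 1))) =
        Ico ((k - 1) * t) ((k - 1) * t + k) := by
    refine image_swap_eq_self ?_
    simp only [mem_Ico, Nat.mul_add_one]
    rcases ht.lt_or_eq with htd | rfl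
    · have : (k - 1) * (t + 1) ≤ (k - 1) * d := Nat.mul_le_mul_left _ htd
      rw [Nat.mul_add_one] at this
      omega
    · omega
  rw [shortcutPerm, Equiv.Perm.coe_mul, ← Finset.image_image, hback, hfront]

theorem shortcut_natCast {v : ZMod ((k - 1) * m) → V} (hj : j < k - 1) (hd : 1 ≤ d)
    (hx : v j = v (((k - 1) * d + j' : ℕ) : ZMod ((k - 1) * m))) {n : ℕ}
    (hn : n ≤ (k - 1) * (d + 1)) :
    shortcut v j d j' n = v (shortcutPerm k j d j' n : ℕ) := by
  rw [shortcut, ZMod.val_natCast]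
  rcases hn.lt_or_eq with hn | rfl
  · rw [Nat.mod_eq_of_lt hn]
  · rw [Nat.mod_self, shortcutPerm_zero hj hd, shortcutPerm_end hj hd, hx]

end shortcut

variable [DecidableEq V] {E : Finset (Finset V)}

def block (k m : ℕ) (v : ZMod ((k - 1) * m) → V) (c : ℕ) : Finset V :=
  univ.image fun j : Fin k => v (((k - 1) * c + j : ℕ) : ZMod ((k - 1) * m))

theorem block_mod (v : ZMod ((k - 1) * m) → V) (c : ℕ) : block k m v (c % m) = block k m v c := by
  unfold block
  congr! 3 with j
  rw [ZMod.natCast_eq_natCast_iff]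
  exact ((Nat.mod_modEq c m).mul_left' _).add_right _

theorem block_eq_image_Ico (v : ZMod ((k - 1) * m) → V) (c : ℕ) :
    block k m v c = (Ico ((k - 1) * c) ((k - 1) * c + k)).image fun n : ℕ => v n := by
  ext x
  simp only [block, mem_image, mem_univ, true_and, mem_Ico]
  constructor
  · rintro ⟨j, rfl⟩
    exact ⟨_, ⟨by omega, by omega⟩, rfl⟩
  · rintro ⟨n, ⟨hn, hn'⟩, rfl⟩
    exact ⟨⟨n - (k - 1) * c, by omega⟩, by simp only [Nat.add_sub_cancel' hn]⟩

theorem mem_block (v : ZMod ((k - 1) * m) → V) {c j : ℕ} (hj : j < k) :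
    v (((k - 1) * c + j : ℕ) : ZMod ((k - 1) * m)) ∈ block k m v c :=
  mem_image.mpr ⟨⟨j, hj⟩, mem_univ _, rfl⟩

theorem block_rotate (v : ZMod ((k - 1) * m) → V) (i c : ℕ) :
    block k m (fun r => v (r + ((k - 1) * i : ℕ))) c = block k m v (c + i) := by
  simp only [block]
  congr 1
  funext j
  congr 1
  push_cast
  ring

theorem block_shortcut {v : ZMod ((k - 1) * m) → V} {j d j' : ℕ} (hj : j < k - 1) (hj' : 1 ≤ j')
    (hj'k : j' ≤ k - 1) (hd : 1 ≤ d) (hx : v j = v (((k - 1) * d + j' : ℕ) : ZMod ((k - 1) * m)))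
    {t : ℕ} (ht : t ≤ d) :
    block k (d + 1) (shortcut v j d j') t = block k m v t := by
  have hlast : (k - 1) * t + k ≤ (k - 1) * (d + 1) + 1 := by
    have := Nat.mul_le_mul_left (k - 1) ht
    rw [Nat.mul_add_one]
    omega
  rw [block_eq_image_Ico, block_eq_image_Ico]
  calc (Ico ((k - 1) * t) ((k - 1) * t + k)).image (fun n : ℕ => shortcut v j d j' n)
      = (Ico ((k - 1) * t) ((k - 1) * t + k)).image
          (fun n : ℕ => v (shortcutPerm k j d j' n : ℕ)) :=
        image_congr fun n hn => shortcut_natCast hj hd hx (by have := mem_Ico.mp hn; omega)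
    _ = ((Ico ((k - 1) * t) ((k - 1) * t + k)).image (shortcutPerm k j d j')).image
          (fun n : ℕ => v n) := by rw [Finset.image_image]; rfl
    _ = _ := by rw [image_shortcutPerm_Ico hj hj' hj'k ht]

structure IsClosedTrail (k : ℕ) (E : Finset (Finset V)) (m : ℕ) (v : ZMod ((k - 1) * m) → V) :
    Prop where
  block_mem : ∀ c, block k m v c ∈ E
  modEq_of_block_eq : ∀ {c c'}, block k m v c = block k m v c' → c ≡ c' [MOD m]

namespace IsClosedTrail

variable {v : ZMod ((k - 1) * m) → V}

theorem of_forall_fin (hm : 0 < m) (hmem : ∀ i : Fin m, block k m v i ∈ E)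
    (hdist : ∀ i i' : Fin m, i ≠ i' → block k m v i ≠ block k m v i') :
    IsClosedTrail k E m v where
  block_mem c := block_mod v c ▸ hmem ⟨c % m, Nat.mod_lt c hm⟩
  modEq_of_block_eq {c c'} h := by
    rw [← block_mod v c, ← block_mod v c'] at h
    by_contra hne
    exact hdist ⟨_, Nat.mod_lt c hm⟩ ⟨_, Nat.mod_lt c' hm⟩ (fun h => hne (Fin.val_eq_of_eq h)) h

theorem hasLooseCycle (h : IsClosedTrail k E m v) (hv : Injective v) : HasLooseCycle k E m :=
  ⟨v, hv, fun i => h.block_mem i⟩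

theorem rotate (h : IsClosedTrail k E m v) (i : ℕ) :
    IsClosedTrail k E m fun r => v (r + ((k - 1) * i : ℕ)) where
  block_mem c := block_rotate v i c ▸ h.block_mem (c + i)
  modEq_of_block_eq hc := by
    rw [block_rotate, block_rotate] at hc
    exact (h.modEq_of_block_eq hc).add_right_cancel' i

theorem eq_of_apply_eq (h : IsClosedTrail k E m v) (hcard : ∀ e ∈ E, e.card = k) {c s s' : ℕ}
    (hs : s < k) (hs' : s' < k)
    (heq : v (((k - 1) * c + s : ℕ) : ZMod ((k - 1) * m)) = v (((k - 1) * c + s' : ℕ))) :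
    s = s' := by
  have hinj := card_image_iff.mp ((hcard _ (h.block_mem c)).trans (card_fin k).symm)
  exact Fin.mk.inj_iff.mp (hinj (mem_coe.mpr (mem_univ ⟨s, hs⟩)) (mem_univ (⟨s', hs'⟩ : Fin k)) heq)

theorem modEq_of_mem_of_mem (h : IsClosedTrail k E m v)
    (hlin : ∀ e ∈ E, ∀ f ∈ E, e ≠ f → (e ∩ f).card ≤ 1) {c c' : ℕ} {x y : V} (hxy : x ≠ y)
    (hx : x ∈ block k m v c) (hx' : x ∈ block k m v c') (hy : y ∈ block k m v c)
    (hy' : y ∈ block k m v c') : c ≡ c' [MOD m] := by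
  refine h.modEq_of_block_eq (not_not.mp fun hne => ?_)
  have := hlin _ (h.block_mem c) _ (h.block_mem c') hne
  have := one_lt_card.mpr ⟨x, mem_inter.mpr ⟨hx, hx'⟩, y, mem_inter.mpr ⟨hy, hy'⟩, hxy⟩
  omega

theorem two_le_and_add_two_le_of_apply_eq (h : IsClosedTrail k E m v)
    (hlin : ∀ e ∈ E, ∀ f ∈ E, e ≠ f → (e ∩ f).card ≤ 1) (hcard : ∀ e ∈ E, e.card = k)
    (hm : 2 ≤ m) {j d j' : ℕ} (hj : j < k - 1) (hj'k : j' ≤ k - 1) (hd : d < m)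
    (hx : v j = v (((k - 1) * d + j' : ℕ) : ZMod ((k - 1) * m)))
    (hne : (j : ZMod ((k - 1) * m)) ≠ (((k - 1) * d + j' : ℕ) : ZMod ((k - 1) * m))) :
    2 ≤ d ∧ d + 2 ≤ m := by
  have hstart : ∀ s : ℕ, (((k - 1) * 0 + s : ℕ) : ZMod ((k - 1) * m)) = s := by simp
  have hx0 : v j ∈ block k m v 0 := hstart j ▸ mem_block v (by omega)
  have hxd : v j ∈ block k m v d := hx ▸ mem_block v (by omega)
  constructor
  · by_contra! hd2
    interval_cases d
    · have hjj' := h.eq_of_apply_eq hcard (c := 0) (s := j) (s' := j') (by omega) (by omega)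
        (by rwa [hstart j])
      exact hne (by rw [hjj', hstart])
    · -- the junction `v (k - 1)` is a second common vertex of blocks `0` and `1`
      have hy0 := mem_block v (c := 0) (j := k - 1) (by omega)
      have hy1 := mem_block v (c := 1) (j := 0) (by omega)
      rw [show (k - 1) * 1 + 0 = (k - 1) * 0 + (k - 1) by ring] at hy1
      have hxy : v j ≠ v (((k - 1) * 0 + (k - 1) : ℕ) : ZMod ((k - 1) * m)) := fun heq =>
        absurd (h.eq_of_apply_eq hcard (c := 0) (s := j) (s' := k - 1) (by omega) (by omega)
          (by rwa [hstart j])) (by omega)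
      have := h.modEq_of_mem_of_mem hlin hxy hx0 hxd hy0 hy1
      simp [Nat.ModEq, Nat.mod_eq_of_lt (show 1 < m by omega)] at this
  · by_contra! hdm
    obtain rfl : d = m - 1 := by omega
    -- `v 0` is a second common vertex of blocks `m - 1` and `0`, unless it is the repeated vertex
    have hwrap : (((k - 1) * (m - 1) + (k - 1) : ℕ) : ZMod ((k - 1) * m)) = 0 := by
      rw [← Nat.mul_add_one, Nat.sub_add_cancel (by omega), ZMod.natCast_self]
    have hy0 : v 0 ∈ block k m v 0 := by simpa using mem_block v (c := 0) (j := 0) (by omega)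
    have hyd : v 0 ∈ block k m v (m - 1) := hwrap ▸ mem_block v (by omega)
    by_cases hxy : v j = v 0
    · have hj0 : j = 0 := h.eq_of_apply_eq hcard (c := 0) (s := j) (s' := 0) (by omega)
        (by omega) (by rw [hstart j, hstart 0, Nat.cast_zero]; exact hxy)
      have hj'k : j' = k - 1 := h.eq_of_apply_eq hcard (c := m - 1) (s := j') (s' := k - 1)
        (by omega) (by omega) (by rw [← hx, hwrap, hxy])
      exact hne (by rw [hj0, hj'k, hwrap, Nat.cast_zero])
    · have := h.modEq_of_mem_of_mem hlin hxy hx0 hxd hy0 hyd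
      simp [Nat.ModEq, Nat.mod_eq_of_lt (show m - 1 < m by omega)] at this
      omega

theorem shortcut (h : IsClosedTrail k E m v) {j d j' : ℕ} (hj : j < k - 1) (hj' : 1 ≤ j')
    (hj'k : j' ≤ k - 1) (hd : 1 ≤ d) (hdm : d < m)
    (hx : v j = v (((k - 1) * d + j' : ℕ) : ZMod ((k - 1) * m))) :
    IsClosedTrail k E (d + 1) (Hypergraph.shortcut v j d j') where
  block_mem c := by
    rw [← block_mod,
      block_shortcut hj hj' hj'k hd hx (Nat.lt_succ_iff.mp (Nat.mod_lt _ d.succ_pos))]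
    exact h.block_mem _
  modEq_of_block_eq {c c'} hc := by
    have hc' : c % (d + 1) ≤ d := Nat.lt_succ_iff.mp (Nat.mod_lt _ d.succ_pos)
    have hc'' : c' % (d + 1) ≤ d := Nat.lt_succ_iff.mp (Nat.mod_lt _ d.succ_pos)
    rw [← block_mod _ c, ← block_mod _ c', block_shortcut hj hj' hj'k hd hx hc',
      block_shortcut hj hj' hj'k hd hx hc''] at hc
    exact (h.modEq_of_block_eq hc).eq_of_lt_of_lt (by omega) (by omega)

theorem exists_shorter (h : IsClosedTrail k E m v) (hk : 2 ≤ k)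
    (hlin : ∀ e ∈ E, ∀ f ∈ E, e ≠ f → (e ∩ f).card ≤ 1) (hcard : ∀ e ∈ E, e.card = k)
    (hm : 2 ≤ m) (hv : ¬Injective v) :
    ∃ m', 3 ≤ m' ∧ m' < m ∧ ∃ w : ZMod ((k - 1) * m') → V, IsClosedTrail k E m' w := by
  have : NeZero ((k - 1) * m) := ⟨Nat.mul_ne_zero (by omega) (by omega)⟩
  obtain ⟨p, q, hpq, hne⟩ := not_injective_iff.mp hv
  -- rotate the walk so that the repeated vertex `v p` sits at position `j < k - 1` of block `0`
  set i := p.val / (k - 1)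
  set j := p.val % (k - 1)
  set shift : ZMod ((k - 1) * m) := (((k - 1) * i : ℕ) : ZMod ((k - 1) * m))
  have hp : p = j + shift := by
    rw [← Nat.cast_add, add_comm, Nat.div_add_mod, ZMod.natCast_zmod_val]
  obtain ⟨d, hd, j', hj', hj'k, hq⟩ := exists_eq_natCast_mul_add hk (by omega) (q - shift)
  have hj : j < k - 1 := Nat.mod_lt _ (by omega)
  have hx : v (j + shift) = v ((((k - 1) * d + j' : ℕ) : ZMod ((k - 1) * m)) + shift) := by
    rw [← hp, ← hq, sub_add_cancel, hpq]
  have hne' : (j : ZMod ((k - 1) * m)) ≠ (((k - 1) * d + j' : ℕ) : ZMod ((k - 1) * m)) := by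
    rw [← hq]
    exact fun hjq => hne (by rw [hp, hjq, sub_add_cancel])
  have hrot := h.rotate i
  obtain ⟨hd2, hdm⟩ := hrot.two_le_and_add_two_le_of_apply_eq hlin hcard hm hj hj'k hd hx hne'
  exact ⟨d + 1, by omega, by omega, _, hrot.shortcut hj hj' hj'k (by omega) hd hx⟩

theorem exists_hasLooseCycle (hk : 2 ≤ k) (hlin : ∀ e ∈ E, ∀ f ∈ E, e ≠ f → (e ∩ f).card ≤ 1)
    (hcard : ∀ e ∈ E, e.card = k) (hm : 3 ≤ m) (h : IsClosedTrail k E m v) :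
    ∃ ℓ, 3 ≤ ℓ ∧ ℓ ≤ m ∧ HasLooseCycle k E ℓ := by
  induction m using Nat.strong_induction_on with
  | _ m ih =>
    by_cases hv : Injective v
    · exact ⟨m, hm, le_rfl, h.hasLooseCycle hv⟩
    obtain ⟨m', hm', hm'm, w, hw⟩ := h.exists_shorter hk hlin hcard (by omega) hv
    obtain ⟨ℓ, hℓ, hℓm', hcycle⟩ := ih m' hm'm hm' hw
    exact ⟨ℓ, hℓ, hℓm'.trans hm'm.le, hcycle⟩

end IsClosedTrail

end Hypergraph

theorem loose_cycle_from_closed_walk_general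
    {V : Type*} [DecidableEq V]
    (k m : ℕ) (hk : 3 ≤ k) (hm : 3 ≤ m)
    (E : Finset (Finset V)) (parts : Fin k → Finset V)
    (hdisj : ∀ i j : Fin k, i ≠ j → Disjoint (parts i) (parts j))
    (hcover : ∀ v : V, ∃ i, v ∈ parts i)
    (hedge : ∀ e ∈ E, ∀ i, (e ∩ parts i).card = 1)
    (hlin : ∀ e ∈ E, ∀ f ∈ E, e ≠ f → (e ∩ f).card ≤ 1)
    (v : ZMod ((k - 1) * m) → V)
    (hseq : ∀ i : Fin m,
      (Finset.univ.image fun j : Fin k =>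
        v ((((k - 1) * (i : ℕ) + (j : ℕ) : ℕ)) : ZMod ((k - 1) * m))) ∈ E)
    (hdistinct : ∀ i i' : Fin m, i ≠ i' →
      (Finset.univ.image fun j : Fin k =>
          v ((((k - 1) * (i : ℕ) + (j : ℕ) : ℕ)) : ZMod ((k - 1) * m)))
        ≠ (Finset.univ.image fun j : Fin k =>
          v ((((k - 1) * (i' : ℕ) + (j : ℕ) : ℕ)) : ZMod ((k - 1) * m)))) :
    ∃ ℓ : ℕ, 3 ≤ ℓ ∧ ℓ ≤ m ∧ HasLooseCycle k E ℓ := by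
  have hcard : ∀ e ∈ E, e.card = k := fun e he => by
    simpa using Finset.card_eq_of_card_inter_eq_one hdisj (fun x _ => hcover x) (hedge e he)
  have htrail := Hypergraph.IsClosedTrail.of_forall_fin (by omega) hseq hdistinct
  exact htrail.exists_hasLooseCycle (by omega) hlin hcard hm

/-- If a linear `k`-partite `k`-uniform hypergraph contains a cyclic sequence of
`(k-1)m` (not necessarily distinct) vertices whose `m` consecutive blocks of `k`
vertices form `m` pairwise distinct edges, then it has girth at most `m`, i.e. it
contains a loose `ℓ`-cycle for some `3 ≤ ℓ ≤ m`. -/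
theorem loose_cycle_from_closed_walk
    {V : Type*} [Fintype V] [DecidableEq V]
    (k m : ℕ) (hk : 3 ≤ k) (hm : 3 ≤ m)
    (E : Finset (Finset V)) (parts : Fin k → Finset V)
    (hdisj : ∀ i j : Fin k, i ≠ j → Disjoint (parts i) (parts j))
    (hcover : ∀ v : V, ∃ i, v ∈ parts i)
    (hedge : ∀ e ∈ E, ∀ i, (e ∩ parts i).card = 1)
    (hlin : ∀ e ∈ E, ∀ f ∈ E, e ≠ f → (e ∩ f).card ≤ 1)
    (v : ZMod ((k - 1) * m) → V)
    (hseq : ∀ i : Fin m,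
      (Finset.univ.image fun j : Fin k =>
        v ((((k - 1) * (i : ℕ) + (j : ℕ) : ℕ)) : ZMod ((k - 1) * m))) ∈ E)
    (hdistinct : ∀ i i' : Fin m, i ≠ i' →
      (Finset.univ.image fun j : Fin k =>
          v ((((k - 1) * (i : ℕ) + (j : ℕ) : ℕ)) : ZMod ((k - 1) * m)))
        ≠ (Finset.univ.image fun j : Fin k =>
          v ((((k - 1) * (i' : ℕ) + (j : ℕ) : ℕ)) : ZMod ((k - 1) * m)))) :
    ∃ ℓ : ℕ, 3 ≤ ℓ ∧ ℓ ≤ m ∧ HasLooseCycle k E ℓ :=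
  loose_cycle_from_closed_walk_general k m hk hm E parts hdisj hcover hedge hlin v hseq hdistinct
end
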